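/- Suppose 0 < α < 1/λ₁, λ_k > 0, and z_k^(t) ≠ 0 at some time t. Then z_k^(t+1) ≠ 0, and for every l ∈ {1, ..., k−1} the coefficient ratios contract by the factor γ_k = (1/(1 + αλ_k))² < 1: (z_l^(t+1)/z_k^(t+1))² ≤ γ_k (z_l^(t)/z_k^(t))². -/

import Mathlib

/-!
In the eigenbasis the deflated Krasulina step is diagonal. If `β` is the Rayleigh quotient of
`x⁽ᵗ⁾`, the deflated coefficients (`l < k`) are multiplied by `r = 1 - αβ` and the `k`-th one by
`r + αλ_k`. Since `0 ≤ αβ ≤ αλ₁ < 1` we have `0 ≤ r ≤ 1`, hence `r / (r + αλ_k) ≤ 1 / (1 + αλ_k)`;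
normalising `x` does not change coefficient ratios.
-/

set_option autoImplicit false

open scoped RealInnerProductSpace

noncomputable def matVec {n : ℕ} (A : Matrix (Fin n) (Fin n) ℝ)
    (v : EuclideanSpace ℝ (Fin n)) : EuclideanSpace ℝ (Fin n) :=
  WithLp.toLp 2 (A.mulVec v)

open Function

section Krasulina

variable {E : Type*} [NormedAddCommGroup E] [InnerProductSpace ℝ E]
  {ι κ : Type*} [Fintype κ] {T : E →ₗ[ℝ] E}

noncomputable def deflatedKrasulinaStep (T : E →ₗ[ℝ] E) (μ : κ → ℝ) (u : κ → E) (α : ℝ)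
    (v : E) : E :=
  v + α • (T v - (⟪v, T v⟫ / ‖v‖ ^ 2) • v - ∑ p, (μ p * ⟪u p, v⟫) • u p)

lemma LinearMap.IsSymmetric.inner_apply_of_apply_eq_smul (hT : T.IsSymmetric) {u : E} {μ : ℝ}
    (hu : T u = μ • u) (z : E) : ⟪u, T z⟫ = μ * ⟪u, z⟫ := by
  rw [← hT, hu, real_inner_smul_left]

lemma LinearMap.IsSymmetric.inner_apply_self_eq_sum [Fintype ι] (hT : T.IsSymmetric)
    (b : OrthonormalBasis ι ℝ E) {lam : ι → ℝ} (heig : ∀ l, T (b l) = lam l • b l) (v : E) :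
    ⟪v, T v⟫ = ∑ l, lam l * ⟪b l, v⟫ ^ 2 := by
  rw [← b.sum_inner_mul_inner v (T v)]
  refine Finset.sum_congr rfl fun l _ => ?_
  rw [hT.inner_apply_of_apply_eq_smul (heig l), real_inner_comm]
  ring

lemma LinearMap.IsSymmetric.inner_apply_self_nonneg_of_eigen_nonneg [Fintype ι]
    (hT : T.IsSymmetric)
    (b : OrthonormalBasis ι ℝ E) {lam : ι → ℝ} (heig : ∀ l, T (b l) = lam l • b l)
    (hnn : ∀ l, 0 ≤ lam l) (v : E) : 0 ≤ ⟪v, T v⟫ := by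
  rw [hT.inner_apply_self_eq_sum b heig]
  exact Finset.sum_nonneg fun l _ => mul_nonneg (hnn l) (sq_nonneg _)

lemma LinearMap.IsSymmetric.inner_apply_self_le_of_eigen_le [Fintype ι] (hT : T.IsSymmetric)
    (b : OrthonormalBasis ι ℝ E) {lam : ι → ℝ} (heig : ∀ l, T (b l) = lam l • b l) {M : ℝ}
    (hM : ∀ l, lam l ≤ M) (v : E) : ⟪v, T v⟫ ≤ M * ‖v‖ ^ 2 := by
  rw [hT.inner_apply_self_eq_sum b heig, ← b.sum_sq_norm_inner_right, Finset.mul_sum]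
  exact Finset.sum_le_sum fun l _ => by
    rw [Real.norm_eq_abs, sq_abs]
    exact mul_le_mul_of_nonneg_right (hM l) (sq_nonneg _)

lemma inner_deflatedKrasulinaStep (hT : T.IsSymmetric) {w : E} {μw : ℝ} (hw : T w = μw • w)
    (μ : κ → ℝ) (u : κ → E) (α : ℝ) (v : E) :
    ⟪w, deflatedKrasulinaStep T μ u α v⟫ =
      (1 + α * (μw - ⟪v, T v⟫ / ‖v‖ ^ 2)) * ⟪w, v⟫ -
        α * ⟪w, ∑ p, (μ p * ⟪u p, v⟫) • u p⟫ := by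
  rw [deflatedKrasulinaStep, inner_add_right, real_inner_smul_right, inner_sub_right,
    inner_sub_right, real_inner_smul_right, hT.inner_apply_of_apply_eq_smul hw]
  ring

lemma div_inner_smul_right_of_ne_zero (a b : E) {c : ℝ} (hc : c ≠ 0) (v : E) :
    ⟪a, c • v⟫ / ⟪b, c • v⟫ = ⟪a, v⟫ / ⟪b, v⟫ := by
  rw [real_inner_smul_right, real_inner_smul_right, mul_div_mul_left _ _ hc]

variable {q : ι → E} {lam : ι → ℝ} {e : κ → ι}

lemma inner_deflatedKrasulinaStep_of_deflated (hT : T.IsSymmetric) (hq : Orthonormal ℝ q)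
    (heig : ∀ l, T (q l) = lam l • q l) (he : Injective e) (α : ℝ) (v : E) (p : κ) :
    ⟪q (e p), deflatedKrasulinaStep T (lam ∘ e) (q ∘ e) α v⟫ =
      (1 - α * (⟪v, T v⟫ / ‖v‖ ^ 2)) * ⟪q (e p), v⟫ := by
  rw [inner_deflatedKrasulinaStep hT (heig (e p)),
    show q (e p) = (q ∘ e) p from rfl, (hq.comp e he).inner_right_fintype]
  simp only [comp_apply]
  ring

lemma inner_deflatedKrasulinaStep_of_not_mem_range (hT : T.IsSymmetric) (hq : Orthonormal ℝ q)
    (heig : ∀ l, T (q l) = lam l • q l) {l : ι} (hl : l ∉ Set.range e) (α : ℝ) (v : E) :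
    ⟪q l, deflatedKrasulinaStep T (lam ∘ e) (q ∘ e) α v⟫ =
      (1 + α * (lam l - ⟪v, T v⟫ / ‖v‖ ^ 2)) * ⟪q l, v⟫ := by
  have hdefl : ⟪q l, ∑ p, ((lam ∘ e) p * ⟪(q ∘ e) p, v⟫) • (q ∘ e) p⟫ = 0 := by
    refine (inner_sum _ _ _).trans (Finset.sum_eq_zero fun p _ => ?_)
    rw [real_inner_smul_right, comp_apply (f := q), hq.inner_eq_zero fun h => hl ⟨p, h.symm⟩,
      mul_zero]
  rw [inner_deflatedKrasulinaStep hT (heig l), hdefl, mul_zero, sub_zero]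

lemma sq_mul_div_add_mul_le_of_le_one {r a x y : ℝ} (hr0 : 0 ≤ r) (hr1 : r ≤ 1) (ha : 0 < a) :
    (r * x / ((r + a) * y)) ^ 2 ≤ (1 / (1 + a)) ^ 2 * (x / y) ^ 2 := by
  have hcontr : r / (r + a) ≤ 1 / (1 + a) := by
    rw [div_le_div_iff₀ (by linarith) (by linarith)]
    nlinarith
  rw [mul_div_mul_comm, mul_pow]
  exact mul_le_mul_of_nonneg_right
    (pow_le_pow_left₀ (div_nonneg hr0 (by linarith)) hcontr 2) (sq_nonneg _)

theorem deflatedKrasulinaStep_ratio_sq_le [Fintype ι] (hT : T.IsSymmetric)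
    (b : OrthonormalBasis ι ℝ E) (heig : ∀ l, T (b l) = lam l • b l) (hnn : ∀ l, 0 ≤ lam l)
    {M α : ℝ} (hM : ∀ l, lam l ≤ M) (hα0 : 0 < α) (hαM : α * M ≤ 1) (he : Injective e)
    {j : ι} (hj : j ∉ Set.range e) (hlamj : 0 < lam j) {v : E} (hzj : ⟪b j, v⟫ ≠ 0) :
    ⟪b j, deflatedKrasulinaStep T (lam ∘ e) (b ∘ e) α v⟫ ≠ 0 ∧
      ∀ p, (⟪b (e p), deflatedKrasulinaStep T (lam ∘ e) (b ∘ e) α v⟫ /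
          ⟪b j, deflatedKrasulinaStep T (lam ∘ e) (b ∘ e) α v⟫) ^ 2 ≤
        (1 / (1 + α * lam j)) ^ 2 * (⟪b (e p), v⟫ / ⟪b j, v⟫) ^ 2 := by
  set β := ⟪v, T v⟫ / ‖v‖ ^ 2
  have hβ0 : 0 ≤ α * β := mul_nonneg hα0.le <|
    div_nonneg (hT.inner_apply_self_nonneg_of_eigen_nonneg b heig hnn v) (sq_nonneg _)
  have hβ1 : α * β ≤ 1 := by
    have hβM : β ≤ M := div_le_of_le_mul₀ (sq_nonneg _) (by linarith [hlamj, hM j])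
      (hT.inner_apply_self_le_of_eigen_le b heig hM v)
    nlinarith
  have hj' : ⟪b j, deflatedKrasulinaStep T (lam ∘ e) (b ∘ e) α v⟫ =
      ((1 - α * β) + α * lam j) * ⟪b j, v⟫ := by
    rw [inner_deflatedKrasulinaStep_of_not_mem_range hT b.orthonormal heig hj]
    ring
  refine ⟨?_, fun p => ?_⟩
  · rw [hj']
    exact mul_ne_zero (by nlinarith [mul_pos hα0 hlamj]) hzj
  · rw [hj', inner_deflatedKrasulinaStep_of_deflated hT b.orthonormal heig he]
    exact sq_mul_div_add_mul_le_of_le_one (by linarith) (by linarith) (mul_pos hα0 hlamj)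

end Krasulina

/-- Indices are 0-based: the 1-based eigenvalue `λ_j` is `lam ⟨j-1, _⟩`, so the 1-based range
`l ∈ {1, …, k-1}` corresponds to the 0-based indices `l` with `(l : ℕ) < k - 1`. -/
theorem krasulina_lower_ratio_contraction
    {d : ℕ}
    (C : Matrix (Fin d) (Fin d) ℝ) (hCsymm : C.IsSymm)
    (lam : Fin d → ℝ) (q : Fin d → EuclideanSpace ℝ (Fin d))
    (hq : Orthonormal ℝ q)
    (heig : ∀ l, matVec C (q l) = lam l • q l)
    (hmono : ∀ i j : Fin d, i ≤ j → lam j ≤ lam i)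
    (hnn : ∀ l, 0 ≤ lam l)
    (k : ℕ) (hk1 : 1 ≤ k) (hkd : k ≤ d)
    (α : ℝ) (hα0 : 0 < α) (hα : α < 1 / lam ⟨0, by omega⟩)
    (hlamk : 0 < lam ⟨k - 1, by omega⟩)
    (x : ℕ → EuclideanSpace ℝ (Fin d))
    (hupd : ∀ t, x (t + 1) = x t + α •
      (matVec C (x t) - (⟪x t, matVec C (x t)⟫ / ‖x t‖ ^ 2) • x t -
        ∑ p : Fin (k - 1),
          (lam (Fin.castLE (by omega) p) * ⟪q (Fin.castLE (by omega) p), x t⟫) •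
            q (Fin.castLE (by omega) p)))
    (t : ℕ) (hzk : ⟪q ⟨k - 1, by omega⟩, ‖x t‖⁻¹ • x t⟫ ≠ 0)
    (γ : ℝ) (hγ : γ = (1 / (1 + α * lam ⟨k - 1, by omega⟩)) ^ 2) :
    γ < 1 ∧ ⟪q ⟨k - 1, by omega⟩, ‖x (t + 1)‖⁻¹ • x (t + 1)⟫ ≠ 0 ∧
      ∀ l : Fin d, (l : ℕ) < k - 1 →
        (⟪q l, ‖x (t + 1)‖⁻¹ • x (t + 1)⟫ /
            ⟪q ⟨k - 1, by omega⟩, ‖x (t + 1)‖⁻¹ • x (t + 1)⟫) ^ 2 ≤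
          γ * (⟪q l, ‖x t‖⁻¹ • x t⟫ / ⟪q ⟨k - 1, by omega⟩, ‖x t‖⁻¹ • x t⟫) ^ 2 := by
  obtain ⟨b, rfl⟩ : ∃ b : OrthonormalBasis (Fin d) ℝ (EuclideanSpace ℝ (Fin d)), ⇑b = q :=
    ⟨.mk hq (hq.linearIndependent.span_eq_top_of_card_eq_finrank' (by simp)).ge,
      OrthonormalBasis.coe_mk _ _⟩
  have hT : (Matrix.toEuclideanLin C).IsSymmetric :=
    Matrix.isSymmetric_toEuclideanLin_iff.mpr (Matrix.isHermitian_iff_isSymm.mpr hCsymm)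
  have hαlam : α * lam ⟨0, by omega⟩ < 1 :=
    (lt_div_iff₀ (hlamk.trans_le (hmono _ _ (Nat.zero_le _)))).mp hα
  have hj : (⟨k - 1, by omega⟩ : Fin d) ∉ Set.range (Fin.castLE (by omega : k - 1 ≤ d)) := by
    rintro ⟨p, hp⟩
    have := congrArg Fin.val hp
    simp only [Fin.val_castLE] at this
    omega
  have hzk' : ⟪b ⟨k - 1, by omega⟩, x t⟫ ≠ 0 := right_ne_zero_of_mul <| by
    rwa [← real_inner_smul_right]
  obtain ⟨hne, hratio⟩ := deflatedKrasulinaStep_ratio_sq_le hT b heig hnn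
    (fun l => hmono _ l (Nat.zero_le _)) hα0 hαlam.le (Fin.castLE_injective _) hj hlamk hzk'
  have hstep : x (t + 1) = deflatedKrasulinaStep (Matrix.toEuclideanLin C)
      (lam ∘ Fin.castLE (by omega : k - 1 ≤ d)) (b ∘ Fin.castLE (by omega : k - 1 ≤ d)) α (x t) :=
    hupd t
  rw [← hstep] at hne hratio
  have hw : ‖x (t + 1)‖⁻¹ ≠ 0 :=
    inv_ne_zero (norm_ne_zero_iff.mpr fun h => hne (by rw [h, inner_zero_right]))
  have hv : ‖x t‖⁻¹ ≠ 0 :=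
    inv_ne_zero (norm_ne_zero_iff.mpr fun h => hzk' (by rw [h, inner_zero_right]))
  refine ⟨?_, ?_, fun l hl => ?_⟩
  · rw [hγ]
    exact pow_lt_one₀ (by positivity)
      ((div_lt_one (by positivity)).mpr (by linarith [mul_pos hα0 hlamk])) two_ne_zero
  · rw [real_inner_smul_right]
    exact mul_ne_zero hw hne
  · rw [div_inner_smul_right_of_ne_zero _ _ hw, div_inner_smul_right_of_ne_zero _ _ hv, hγ]
    exact hratio ⟨l, hl⟩
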